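/- arXiv:1703.08235 — 4 statements merged into one kernel-verified Lean document; each statement's English description precedes it below -/
import Mathlib

section
/- Let G be a simple graph with no stable set of size three such that for every edge e of G, the graph G − e contains a stable set of size three. If G is not a disjoint union of complete graphs, then G contains an induced cycle of length five. -/
/-- `G` has no stable set of size three. -/
def NoStableTriple {V : Type*} (G : SimpleGraph V) : Prop :=
  ∀ a b c : V, a ≠ b → a ≠ c → b ≠ c → G.Adj a b ∨ G.Adj a c ∨ G.Adj b c

/-- If `{x,y} = {a,b}` and the edges from `w` to `x` and `y` can only be `{a,b}`,
then `w` is a vertex distinct from and nonadjacent to both `a` and `b`. -/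
lemma core_aux {V : Type*} {G : SimpleGraph V} {a b x y w : V}
    (hxw : x ≠ w) (hyw : y ≠ w)
    (hkey : s(x, y) = s(a, b))
    (h2 : G.Adj x w → s(x, w) = s(a, b))
    (h3 : G.Adj y w → s(y, w) = s(a, b)) :
    w ≠ a ∧ w ≠ b ∧ ¬ G.Adj a w ∧ ¬ G.Adj b w := by
  have ha : a = x ∨ a = y := Sym2.mem_iff.mp (hkey ▸ Sym2.mem_mk_left a b)
  have hb : b = x ∨ b = y := Sym2.mem_iff.mp (hkey ▸ Sym2.mem_mk_right a b)
  refine ⟨?_, ?_, ?_, ?_⟩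
  · rcases ha with rfl | rfl
    · exact hxw.symm.symm.symm
    · exact hyw.symm.symm.symm
  · rcases hb with rfl | rfl
    · exact hxw.symm.symm.symm
    · exact hyw.symm.symm.symm
  · intro had
    rcases ha with rfl | rfl
    · have := h2 had
      rw [← hkey] at this
      exact hyw (Sym2.congr_right.mp this).symm
    · have := h3 had
      rw [← hkey, Sym2.eq_swap] at this
      exact hxw (Sym2.congr_left.mp this).symm
  · intro hbd
    rcases hb with rfl | rfl
    · have := h2 hbd
      rw [← hkey] at this
      exact hyw (Sym2.congr_right.mp this).symm
    · have := h3 hbd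
      rw [← hkey, Sym2.eq_swap] at this
      exact hxw (Sym2.congr_left.mp this).symm

lemma key_aux {V : Type*} (G : SimpleGraph V)
    (h : NoStableTriple G)
    (hmin : ∀ e ∈ G.edgeSet, ¬ NoStableTriple (G.deleteEdges {e}))
    {a b : V} (hab : G.Adj a b) :
    ∃ z : V, z ≠ a ∧ z ≠ b ∧ ¬ G.Adj a z ∧ ¬ G.Adj b z := by
  have he : s(a, b) ∈ G.edgeSet := hab
  have hm := hmin _ he
  unfold NoStableTriple at hm
  push_neg at hm
  obtain ⟨x, y, w, hxy, hxw, hyw, h1, h2, h3⟩ := hm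
  simp only [SimpleGraph.deleteEdges_adj, Set.mem_singleton_iff, not_and, not_not] at h1 h2 h3
  rcases h x y w hxy hxw hyw with hxy' | hxw' | hyw'
  · exact ⟨w, (core_aux hxw hyw (h1 hxy') h2 h3).1,
      (core_aux hxw hyw (h1 hxy') h2 h3).2.1,
      (core_aux hxw hyw (h1 hxy') h2 h3).2.2.1,
      (core_aux hxw hyw (h1 hxy') h2 h3).2.2.2⟩
  · have h1' : G.Adj x y → s(x, y) = s(a, b) := h1
    have h3' : G.Adj w y → s(w, y) = s(a, b) :=
      fun hadj => Sym2.eq_swap.trans (h3 hadj.symm)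
    have := core_aux hxy hyw.symm (h2 hxw') h1' h3'
    exact ⟨y, this.1, this.2.1, this.2.2.1, this.2.2.2⟩
  · have h1' : G.Adj y x → s(y, x) = s(a, b) :=
      fun hadj => Sym2.eq_swap.trans (h1 hadj.symm)
    have h2' : G.Adj w x → s(w, x) = s(a, b) :=
      fun hadj => Sym2.eq_swap.trans (h2 hadj.symm)
    have := core_aux hxy.symm hxw.symm (h3 hyw') h1' h2'
    exact ⟨x, this.1, this.2.1, this.2.2.1, this.2.2.2⟩

theorem stmt6 {V : Type*} [Fintype V] (G : SimpleGraph V)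
    (h : NoStableTriple G)
    (hmin : ∀ e ∈ G.edgeSet, ¬ NoStableTriple (G.deleteEdges {e}))
    (hnotcluster : ¬ ∀ a b c : V, G.Adj a b → G.Adj b c → a ≠ c → G.Adj a c) :
    ∃ a : Fin 5 → V, Function.Injective a ∧
      ∀ i j : Fin 5, G.Adj (a i) (a j) ↔ (j = i + 1 ∨ i = j + 1) := by
  push_neg at hnotcluster
  obtain ⟨a, b, c, hab, hbc, hac_ne, hac⟩ := hnotcluster
  obtain ⟨d, hda, hdb, had, hbd⟩ := key_aux G h hmin hab
  have hdc : d ≠ c := fun hdc => hbd (hdc ▸ hbc)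
  have hcd : G.Adj c d := by
    rcases h a c d hac_ne (Ne.symm hda) (Ne.symm hdc) with h' | h' | h'
    · exact absurd h' hac
    · exact absurd h' had
    · exact h'
  obtain ⟨e, heb, hec, hbe, hce⟩ := key_aux G h hmin hbc
  have hea : e ≠ a := fun hea => hbe (hea ▸ hab.symm)
  have hed : e ≠ d := fun hed => hce (hed ▸ hcd)
  have hae : G.Adj a e := by
    rcases h a c e hac_ne (Ne.symm hea) (Ne.symm hec) with h' | h' | h'
    · exact absurd h' hac
    · exact h'
    · exact absurd h' hce
  have hde : G.Adj d e := by
    rcases h b d e (Ne.symm hdb) (Ne.symm heb) (Ne.symm hed) with h' | h' | h'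
    · exact absurd h' hbd
    · exact absurd h' hbe
    · exact h'
  have hab_ne := hab.ne
  have hbc_ne := hbc.ne
  have hca : ¬ G.Adj c a := fun h' => hac h'.symm
  have hda' : ¬ G.Adj d a := fun h' => had h'.symm
  have hdb' : ¬ G.Adj d b := fun h' => hbd h'.symm
  have heb' : ¬ G.Adj e b := fun h' => hbe h'.symm
  have hec' : ¬ G.Adj e c := fun h' => hce h'.symm
  have hba : G.Adj b a := hab.symm
  have hcb : G.Adj c b := hbc.symm
  have hdc' : G.Adj d c := hcd.symm
  have hed' : G.Adj e d := hde.symm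
  have hea' : G.Adj e a := hae.symm
  refine ⟨![a, b, c, d, e], ?_, ?_⟩
  · intro i j hij
    fin_cases i <;> fin_cases j <;> simp_all
  · intro i j
    fin_cases i <;> fin_cases j <;>
      simp_all [Fin.ext_iff] <;> omega
end

section
/- Let t ≥ 0 and let U be a finite set with |U| ≥ 5t. Suppose A_1,...,A_5 are subsets of U with |A_i| ≤ 2t and A_i ∩ A_{i+2} = ∅ for all i (indices mod 5). Then there exist sets A_1',...,A_5' with A_i ⊆ A_i' ⊆ U, |A_i'| ≤ 2t, A_i' ∩ A_{i+2}' = ∅ for all i, and there exists an index i with |A_i'| = |A_{i+2}'| = 2t. -/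
/-!
Write `u = |U|`, `a_j = |A_j|`, `f_j = |A_j ∪ A_{j+1}|` and `g_j = |A_j ∩ A_{j+1}|`. Cyclic
disjointness gives `g_j + g_{j+1} ≤ a_{j+1}` and `f_j + f_{j+2} ≤ u + g_{j+1}`, and with
`a_j ≤ 2t` and `5t ≤ u` these force an index `i` with `g_i ≤ u - 4t` and
`f_{i-1}, f_{i+1} ≤ u - 2t`. For such an `i`, enlarge `A_{i+2}` (avoiding `A_i` and `A_{i+4}`) to
size `2t`, taking elements of `A_{i+1}` first; this leaves room to enlarge `A_{i+4}` (avoiding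
`A_{i+1}` and the new `A_{i+2}`) to size `2t` as well.
-/

open Finset

section

variable {α : Type*} [DecidableEq α]

/-- `u` takes elements of `e` first: it uses no other new elements, or all of `t ∩ e`. -/
lemma exists_subsuperset_card_eq_greedy {s t : Finset α} {n : ℕ} (e : Finset α)
    (hst : s ⊆ t) (hsn : #s ≤ n) (hnt : n ≤ #t) :
    ∃ u, s ⊆ u ∧ u ⊆ t ∧ #u = n ∧ (u ⊆ s ∪ e ∨ t ∩ e ⊆ u) := by
  rcases le_total n #(s ∪ t ∩ e) with h | h
  · obtain ⟨u, hsu, hu, rfl⟩ := exists_subsuperset_card_eq subset_union_left hsn h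
    exact ⟨u, hsu, hu.trans (union_subset hst inter_subset_left), rfl,
      Or.inl (hu.trans (union_subset_union_right inter_subset_right))⟩
  · obtain ⟨u, hsu, hu, rfl⟩ :=
      exists_subsuperset_card_eq (union_subset hst inter_subset_left) h hnt
    exact ⟨u, subset_union_left.trans hsu, hu, rfl, Or.inr (subset_union_right.trans hsu)⟩

lemma card_inter_add_card_inter_le {X Y Z : Finset α} (h : Disjoint X Z) :
    #(X ∩ Y) + #(Y ∩ Z) ≤ #Y := by
  rw [← card_union_of_disjoint (h.mono inter_subset_left inter_subset_right)]
  exact card_le_card (union_subset inter_subset_right inter_subset_left)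

variable [Fintype α]

lemma card_union_add_card_union_le {W X Y Z : Finset α}
    (hWY : Disjoint W Y) (hWZ : Disjoint W Z) (hXZ : Disjoint X Z) :
    #(W ∪ X) + #(Y ∪ Z) ≤ Fintype.card α + #(X ∩ Y) := by
  rw [← card_union_add_card_inter]
  refine add_le_add (card_le_univ _) (card_le_card fun x hx => ?_)
  simp only [mem_inter, mem_union] at hx ⊢
  rcases hx with ⟨hW | hX, hY | hZ⟩
  · exact absurd hY (disjoint_left.mp hWY hW)
  · exact absurd hZ (disjoint_left.mp hWZ hW)
  · exact ⟨hX, hY⟩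
  · exact absurd hZ (disjoint_left.mp hXZ hX)

lemma exists_disjoint_supersets_card_eq {B₀ C₀ D E : Finset α} {n : ℕ}
    (hB₀D : Disjoint B₀ D) (hC₀E : Disjoint C₀ E) (hB₀C₀ : Disjoint B₀ C₀)
    (hB₀ : #B₀ ≤ n) (hC₀ : #C₀ ≤ n)
    (hD : n + #(D ∪ C₀) ≤ Fintype.card α) (hE : n + #(E ∪ B₀) ≤ Fintype.card α)
    (hDE : n + n + #(D ∩ E) ≤ Fintype.card α) :
    ∃ B C, B₀ ⊆ B ∧ C₀ ⊆ C ∧ Disjoint B C ∧ Disjoint B D ∧ Disjoint C E ∧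
      #B = n ∧ #C = n := by
  obtain ⟨B, hB₀B, hB, hBn, hBE⟩ := exists_subsuperset_card_eq_greedy E
    (subset_compl_iff_disjoint_right.mpr (disjoint_union_right.mpr ⟨hB₀D, hB₀C₀⟩)) hB₀
    (by rw [card_compl]; omega)
  rw [subset_compl_iff_disjoint_right, disjoint_union_right] at hB
  have hEB : n + #(E ∪ B) ≤ Fintype.card α := by
    rcases hBE with hBE | hBE
    · have : E ∪ B ⊆ E ∪ B₀ := union_subset subset_union_left (hBE.trans (union_comm B₀ E).le)
      have := card_le_card this
      omega
    · -- `B` has absorbed every element of `E` outside `D`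
      have : E ∪ B ⊆ D ∩ E ∪ B := by
        intro x hx
        rcases mem_union.mp hx with hxE | hxB
        · by_cases hxD : x ∈ D
          · exact mem_union_left _ (mem_inter.mpr ⟨hxD, hxE⟩)
          · refine mem_union_right _ (hBE (mem_inter.mpr ⟨?_, hxE⟩))
            simp [hxD, disjoint_right.mp hC₀E hxE]
        · exact mem_union_right _ hxB
      have := (card_le_card this).trans (card_union_le _ _)
      omega
  obtain ⟨C, hC₀C, hC, hCn⟩ := exists_subsuperset_card_eq
    (subset_compl_iff_disjoint_right.mpr (disjoint_union_right.mpr ⟨hC₀E, hB.2.symm⟩)) hC₀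
    (by rw [card_compl]; omega)
  rw [subset_compl_iff_disjoint_right, disjoint_union_right] at hC
  exact ⟨B, C, hB₀B, hC₀C, hC.2.symm, hB.1, hC.1, hBn, hCn⟩

end

/- `bf j` and `bg j` flag `f_j > u - 2t` and `g_j > u - 4t`; the hypotheses are what the bounds of
`exists_index_of_pentagon_bounds` say about these flags, and the rest is a finite check. -/
set_option synthInstance.maxSize 1000 in
lemma exists_good_edge_of_pentagon_rules (bf bg : Fin 5 → Bool)
    (hgg : ∀ j, ¬(bg j ∧ bg (j + 1))) (hfg : ∀ j, ¬(bf j ∧ bg j))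
    (hff : ∀ j, bf j → bf (j + 2) → bg (j + 1))
    (hffg : ∀ j, bf j → bf (j + 1) → ¬bg (j + 3)) :
    ∃ i, ¬bg i ∧ ¬bf (i + 1) ∧ ¬bf (i + 4) := by
  revert bf bg
  decide

lemma exists_index_of_pentagon_bounds {t u : ℕ} {a f g : Fin 5 → ℕ} (hu : 5 * t ≤ u)
    (ha : ∀ j, a j ≤ 2 * t) (hafg : ∀ j, a j + a (j + 1) = f j + g j)
    (hg : ∀ j, g j + g (j + 1) ≤ a (j + 1)) (hf : ∀ j, f j + f (j + 2) ≤ u + g (j + 1)) :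
    ∃ i, 4 * t + g i ≤ u ∧ 2 * t + f (i + 1) ≤ u ∧ 2 * t + f (i + 4) ≤ u := by
  have key := exists_good_edge_of_pentagon_rules
    (fun j => decide (u < 2 * t + f j)) (fun j => decide (u < 4 * t + g j))
  simp only [decide_eq_true_eq, not_lt, not_and] at key
  refine key (fun j hj => ?_) (fun j hj => ?_) (fun j hj hj₂ => ?_) (fun j hj hj₁ => ?_)
  · have := hg j; have := ha (j + 1); omega
  · have := hafg j; have := ha j; have := ha (j + 1); omega
  · have h₁ := hf j; have h₂ := hafg (j + 1); have := ha (j + 1); have := ha (j + 2)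
    simp only [add_assoc, Fin.reduceAdd] at hj₂ h₁ h₂
    omega
  · have h₁ := hf j; have h₂ := hafg (j + 1); have h₃ := hafg (j + 2); have h₄ := hg (j + 2)
    have := ha (j + 1)
    simp only [add_assoc, Fin.reduceAdd] at h₁ h₂ h₃ h₄
    omega

section Pentagon

variable {α : Type*} [DecidableEq α] [Fintype α] {A : Fin 5 → Finset α} {t : ℕ}

lemma exists_index_card_room (hA : ∀ j, Disjoint (A j) (A (j + 2)))
    (hcard : ∀ j, #(A j) ≤ 2 * t) (hU : 5 * t ≤ Fintype.card α) :
    ∃ i, 4 * t + #(A i ∩ A (i + 1)) ≤ Fintype.card α ∧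
      2 * t + #(A (i + 1) ∪ A (i + 2)) ≤ Fintype.card α ∧
      2 * t + #(A (i + 4) ∪ A i) ≤ Fintype.card α := by
  have key := exists_index_of_pentagon_bounds (a := fun j => #(A j))
    (f := fun j => #(A j ∪ A (j + 1))) (g := fun j => #(A j ∩ A (j + 1))) hU hcard
    (fun j => (card_union_add_card_inter _ _).symm)
    (fun j => by
      simpa only [add_assoc, Fin.reduceAdd] using card_inter_add_card_inter_le (hA j))
    (fun j => by
      have h₃ := hA (j + 3)
      have h₁ := hA (j + 1)
      simp only [add_assoc, Fin.reduceAdd, add_zero] at h₃ h₁ ⊢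
      exact card_union_add_card_union_le (hA j) h₃.symm h₁)
  simpa only [add_assoc, Fin.reduceAdd, add_zero] using key

lemma exists_extension_of_card_room_at_zero (hA : ∀ j, Disjoint (A j) (A (j + 2)))
    (hcard : ∀ j, #(A j) ≤ 2 * t) (h₀₁ : 4 * t + #(A 0 ∩ A 1) ≤ Fintype.card α)
    (h₁₂ : 2 * t + #(A 1 ∪ A 2) ≤ Fintype.card α)
    (h₄₀ : 2 * t + #(A 4 ∪ A 0) ≤ Fintype.card α) :
    ∃ A' : Fin 5 → Finset α, (∀ j, A j ⊆ A' j) ∧ (∀ j, #(A' j) ≤ 2 * t) ∧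
      (∀ j, Disjoint (A' j) (A' (j + 2))) ∧ #(A' 2) = 2 * t ∧ #(A' 4) = 2 * t := by
  obtain ⟨B, C, hB, hC, hBC, hB₀, hC₁, hBn, hCn⟩ := exists_disjoint_supersets_card_eq
    (B₀ := A 2) (E := A 1) (hA 0).symm (hA 4) (hA 2) (hcard 2) (hcard 4)
    (by rwa [union_comm]) h₁₂ (by omega)
  have h₁₃ : Disjoint (A 1) (A 3) := hA 1
  have h₃₀ : Disjoint (A 3) (A 0) := hA 3
  refine ⟨![A 0, A 1, B, A 3, C], fun j => ?_, fun j => ?_, fun j => ?_, hBn, hCn⟩ <;>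
    fin_cases j
  all_goals simp [hB, hC, hcard, hBn, hCn, hBC, hB₀.symm, hC₁, h₁₃, h₃₀]

end Pentagon

theorem stmt9 {U : Type*} [DecidableEq U] [Fintype U] (t : ℕ)
    (hU : 5 * t ≤ Fintype.card U)
    (A : Fin 5 → Finset U)
    (hcard : ∀ i, (A i).card ≤ 2 * t)
    (hdisj : ∀ i, A i ∩ A (i + 2) = ∅) :
    ∃ A' : Fin 5 → Finset U,
      (∀ i, A i ⊆ A' i) ∧ (∀ i, (A' i).card ≤ 2 * t) ∧
      (∀ i, A' i ∩ A' (i + 2) = ∅) ∧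
      ∃ i : Fin 5, (A' i).card = 2 * t ∧ (A' (i + 2)).card = 2 * t := by
  have hA : ∀ j, Disjoint (A j) (A (j + 2)) := fun j => disjoint_iff_inter_eq_empty.mpr (hdisj j)
  obtain ⟨i, h₀₁, h₁₂, h₄₀⟩ := exists_index_card_room hA hcard hU
  obtain ⟨A', hsub, hcard', hdisj', h₂, h₄⟩ :=
    exists_extension_of_card_room_at_zero (A := fun j => A (j + i))
      (fun j => by simpa only [add_right_comm] using hA (j + i)) (fun j => hcard _)
      (by simpa [add_comm] using h₀₁) (by simpa [add_comm] using h₁₂)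
      (by simpa [add_comm] using h₄₀)
  refine ⟨fun j => A' (j - i), fun j => by simpa using hsub (j - i), fun j => hcard' _,
    fun j => disjoint_iff_inter_eq_empty.mp ?_, i + 2, by simpa using h₂, ?_⟩
  · simpa [sub_add_eq_add_sub] using hdisj' (j - i)
  · simpa [add_assoc] using h₄
end

section
/- Let H be a finite graph whose edges are each colored either 'odd' or 'even'. Then there exists a subset S of V(H) such that, after flipping the color of every edge with exactly one endpoint in S, the number of even edges is at least the number of odd edges. -/
/-!
Averaging over all vertex sets `S`: for an edge `ab`, toggling `a` in or out of `S` flips the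
color of `ab`, so `ab` is even for exactly half of the sets `S`. Hence, summed over all `S`, the
numbers of odd and of even edges agree, and some `S` has at most as many odd edges as even ones.
-/

/-- The coloring obtained from `c` by flipping the color of every edge with
exactly one endpoint in `S`. -/
def flipColoring {V : Type*} [DecidableEq V] (c : Sym2 V → ZMod 2) (S : Finset V) :
    Sym2 V → ZMod 2 :=
  fun e => c e +
    Sym2.lift ⟨fun a b => (if a ∈ S then (1 : ZMod 2) else 0) + (if b ∈ S then 1 else 0),
      fun a b => add_comm _ _⟩ e

open Finset

lemma card_filter_eq_one_eq_card_filter_eq_zero {α : Type*} [Fintype α] (g : α → ZMod 2)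
    {f : α → α} (hf : Function.Involutive f) (hg : ∀ x, g (f x) = g x + 1) :
    #{x | g x = 1} = #{x | g x = 0} := by
  refine card_nbij' f f ?_ ?_ (fun x _ => hf x) (fun x _ => hf x) <;> intro x hx <;>
    simp only [coe_filter, mem_univ, true_and, Set.mem_ofPred_eq] at hx ⊢ <;>
    rw [hg, hx] <;> rfl

section

variable {V : Type*} [DecidableEq V]

lemma flipColoring_symmDiff_singleton (c : Sym2 V → ZMod 2) (S : Finset V) {a b : V}
    (hab : a ≠ b) :
    flipColoring c (symmDiff S {a}) s(a, b) = flipColoring c S s(a, b) + 1 := by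
  have ha : a ∈ symmDiff S {a} ↔ a ∉ S := by simp [mem_symmDiff]
  have hb : b ∈ symmDiff S {a} ↔ b ∈ S := by simp [mem_symmDiff, hab.symm]
  have ite_not_eq (p : Prop) [Decidable p] :
      (if ¬p then (1 : ZMod 2) else 0) = (if p then 1 else 0) + 1 := by
    split_ifs <;> decide
  simp only [flipColoring, Sym2.lift_mk, ha, hb, ite_not_eq]
  ring

lemma card_flipColoring_eq_one_eq_card_flipColoring_eq_zero [Fintype V]
    (c : Sym2 V → ZMod 2) {e : Sym2 V} (he : ¬e.IsDiag) :
    #{S : Finset V | flipColoring c S e = 1} = #{S : Finset V | flipColoring c S e = 0} := by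
  induction e using Sym2.ind with
  | _ a b =>
    exact card_filter_eq_one_eq_card_filter_eq_zero (f := (symmDiff · {a}))
      (fun S => flipColoring c S s(a, b)) (symmDiff_symmDiff_cancel_right {a} ·)
      (flipColoring_symmDiff_singleton c · he)

end

theorem stmt11 {V : Type*} [Fintype V] [DecidableEq V] (G : SimpleGraph V)
    [DecidableRel G.Adj] (c : Sym2 V → ZMod 2) :
    ∃ S : Finset V,
      (G.edgeFinset.filter (fun e => flipColoring c S e = 1)).card ≤
      (G.edgeFinset.filter (fun e => flipColoring c S e = 0)).card := by
  have sum_eq : ∑ S : Finset V, #{e ∈ G.edgeFinset | flipColoring c S e = 1} =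
      ∑ S : Finset V, #{e ∈ G.edgeFinset | flipColoring c S e = 0} := by
    simp only [card_filter]
    rw [sum_comm, sum_comm (s := univ)]
    refine sum_congr rfl fun e he => ?_
    simp only [← card_filter]
    exact card_flipColoring_eq_one_eq_card_flipColoring_eq_zero c
      (G.not_isDiag_of_mem_edgeSet (SimpleGraph.mem_edgeFinset.mp he))
  obtain ⟨S, -, hS⟩ := exists_le_of_sum_le univ_nonempty sum_eq.le
  exact ⟨S, hS⟩
end

section
/- Let G be a finite simple graph, C a finite set of colors, and N ⊆ V(G) such that every proper coloring of G with colors from C uses every color of C on N. Let c : V(G) → C be a proper coloring, and suppose x is the unique vertex of N with c(x) = a and y is the unique vertex of N with c(y) = b, where a ≠ b. Then x and y lie in the same connected component of the subgraph of G induced on c⁻¹({a, b}). -/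
theorem stmt14 {V C : Type*} [Fintype V] [Fintype C] (G : SimpleGraph V) (N : Finset V)
    (hN : ∀ c' : V → C, (∀ a b, G.Adj a b → c' a ≠ c' b) → ∀ d : C, ∃ v ∈ N, c' v = d)
    (c : V → C) (hc : ∀ a b, G.Adj a b → c a ≠ c b)
    (a b : C) (hab : a ≠ b) (x y : V) (hx : x ∈ N) (hy : y ∈ N)
    (hxa : c x = a) (hyb : c y = b)
    (hxu : ∀ z ∈ N, c z = a → z = x) (hyu : ∀ z ∈ N, c z = b → z = y) :
    (G.induce {v | c v = a ∨ c v = b}).Reachable ⟨x, Or.inl hxa⟩ ⟨y, Or.inr hyb⟩ := by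
  classical
  by_contra hreach
  set T : Set V := {v | c v = a ∨ c v = b} with hT
  let G' := G.induce T
  let S : V → Prop := fun v => ∃ h : v ∈ T, G'.Reachable ⟨x, Or.inl hxa⟩ ⟨v, h⟩
  have hxS : S x := ⟨Or.inl hxa, SimpleGraph.Reachable.refl _⟩
  have hyS : ¬ S y := by
    rintro ⟨h, hr⟩
    exact hreach hr
  have hSmem : ∀ {v}, S v → (c v = a ∨ c v = b) := fun h => h.1
  have hext : ∀ {u v}, S u → G.Adj u v → (c v = a ∨ c v = b) → S v := by
    rintro u v ⟨hu, hr⟩ hadj hv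
    refine ⟨hv, hr.trans (SimpleGraph.Adj.reachable ?_)⟩
    exact hadj
  let c' : V → C := fun v => if S v then Equiv.swap a b (c v) else c v
  have hST : ∀ {v}, S v → Equiv.swap a b (c v) = a ∨ Equiv.swap a b (c v) = b := by
    intro v hv
    rcases hSmem hv with h | h
    · rw [h, Equiv.swap_apply_left]; exact Or.inr rfl
    · rw [h, Equiv.swap_apply_right]; exact Or.inl rfl
  have hproper : ∀ u v, G.Adj u v → c' u ≠ c' v := by
    intro u v hadj heq
    by_cases hu : S u <;> by_cases hv : S v <;>
      simp only [c', if_pos, if_neg, hu, hv, if_true, if_false] at heq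
    · exact hc u v hadj ((Equiv.swap a b).injective heq)
    · have hvT : ¬ (c v = a ∨ c v = b) := fun h => hv (hext hu hadj h)
      exact hvT (heq ▸ hST hu)
    · have huT : ¬ (c u = a ∨ c u = b) := fun h => hu (hext hv hadj.symm h)
      exact huT (heq ▸ hST hv)
    · exact hc u v hadj heq
  obtain ⟨v, hvN, hva⟩ := hN c' hproper a
  by_cases hvS : S v
  · simp only [c', if_pos hvS] at hva
    rcases hSmem hvS with h | h
    · rw [h, Equiv.swap_apply_left] at hva; exact hab hva.symm
    · have hvy : v = y := hyu v hvN h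
      exact hyS (hvy ▸ hvS)
  · simp only [c', if_neg hvS] at hva
    have hvx : v = x := hxu v hvN hva
    exact hvS (hvx ▸ hxS)
end
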